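/- Under the incomplete noisy observation model, fix ρ > 0 and c > 0, define ẑ ∈ ℝ^s by ẑ_i = sign(u_{1,i}) for i ∈ J, and let c₀ = √(s^c·(p(1−p)·‖M*_{J^c,J}‖_F² + p·s·(d−s)·σ²)). Then with probability at least 1 − s^{−c}, for every unit leading eigenvector x̂ of M_{J,J} − ρẑẑᵀ, the vector ŵ = (1/(ρ‖x̂‖₁))·M_{J^c,J}·x̂ satisfies ‖ŵ‖₂ ≤ (p/ρ)·‖M*_{J,J^c}‖_{∞,2} + c₀·√(d−s)/ρ. -/

import Mathlib

open MeasureTheory ProbabilityTheory Matrix Finset Real Filter Asymptotics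

noncomputable section

/-- The `k`-th largest eigenvalue (1-indexed, counted with multiplicity) of a real
symmetric matrix; defined to be `0` if the matrix is not symmetric or `k` is out of range. -/
def eigvalDesc {m : Type*} [Fintype m] [DecidableEq m] (A : Matrix m m ℝ) (k : ℕ) : ℝ :=
  if h : A.IsHermitian then
    (Multiset.sort (Finset.univ.val.map h.eigenvalues) (· ≤ ·)).getD
      ((Multiset.sort (Finset.univ.val.map h.eigenvalues) (· ≤ ·)).length - k) 0
  else 0

/-- The spectral norm (ℓ₂ operator norm) of a real matrix. -/
def specNorm {m n : Type*} [Fintype m] [Fintype n] [DecidableEq n] (A : Matrix m n ℝ) : ℝ :=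
  ‖LinearMap.toContinuousLinearMap (Matrix.toEuclideanLin A)‖

/-- Frobenius norm. -/
def frobNorm {m n : Type*} [Fintype m] [Fintype n] (A : Matrix m n ℝ) : ℝ :=
  Real.sqrt (∑ i, ∑ j, (A i j) ^ 2)

/-- Entrywise max norm. -/
def maxNorm {m n : Type*} [Fintype m] [Fintype n] (A : Matrix m n ℝ) : ℝ :=
  ⨆ i, ⨆ j, |A i j|

/-- `(2,∞)` norm: maximum of the ℓ₂ norms of the columns. -/
def norm2Inf {m n : Type*} [Fintype m] [Fintype n] (A : Matrix m n ℝ) : ℝ :=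
  ⨆ j, Real.sqrt (∑ i, (A i j) ^ 2)

/-- `(∞,2)` norm: ℓ₂ norm of the vector of columnwise max absolute values. -/
def normInf2 {m n : Type*} [Fintype m] [Fintype n] (A : Matrix m n ℝ) : ℝ :=
  Real.sqrt (∑ j, (⨆ i, |A i j|) ^ 2)

/-- Submatrix of `A` with rows in `R` and columns in `C`. -/
def subm {d : ℕ} (A : Matrix (Fin d) (Fin d) ℝ) (R C : Finset (Fin d)) :
    Matrix R C ℝ := fun i j => A i.1 j.1

/-- Objective of the ℓ₁-penalized sparse-PCA SDP: `⟨M, X⟩ − ρ‖X‖₁,₁`. -/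
def sdpObj {n : Type*} [Fintype n] (ρ : ℝ) (M X : Matrix n n ℝ) : ℝ :=
  (∑ i, ∑ j, M i j * X i j) - ρ * ∑ i, ∑ j, |X i j|

/-- Feasibility for the SDP: symmetric positive semidefinite with unit trace. -/
def IsSdpFeasible {n : Type*} [Fintype n] (X : Matrix n n ℝ) : Prop :=
  X.PosSemidef ∧ X.trace = 1

/-- `X` is an optimal solution of `max ⟨M, Y⟩ − ρ‖Y‖₁,₁` s.t. `Y ⪰ 0`, `tr Y = 1`. -/
def IsSdpOptimal {n : Type*} [Fintype n] (ρ : ℝ) (M X : Matrix n n ℝ) : Prop :=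
  IsSdpFeasible X ∧ ∀ Y : Matrix n n ℝ, IsSdpFeasible Y → sdpObj ρ M Y ≤ sdpObj ρ M X

/-- `X` is the unique optimal solution of the SDP. -/
def IsUniqueSdpOptimal {n : Type*} [Fintype n] (ρ : ℝ) (M X : Matrix n n ℝ) : Prop :=
  IsSdpOptimal ρ M X ∧ ∀ Y : Matrix n n ℝ, IsSdpOptimal ρ M Y → Y = X

/-- The incomplete and noisy observation model for sparse PCA. -/
structure ObsModel (d : ℕ) (Ω : Type*) [MeasurableSpace Ω] where
  hd : 2 ≤ d
  μ : Measure Ω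
  probμ : IsProbabilityMeasure μ
  /-- the unknown true symmetric matrix -/
  Mstar : Matrix (Fin d) (Fin d) ℝ
  hsym : Mstar.IsSymm
  /-- its eigenvalues, in decreasing order -/
  lam : Fin d → ℝ
  /-- corresponding orthonormal eigenvectors -/
  u : Fin d → Fin d → ℝ
  heig : ∀ k, Mstar.mulVec (u k) = lam k • u k
  horth : ∀ k l, (∑ i, u k i * u l i) = if k = l then (1 : ℝ) else 0
  hmono : ∀ k l : Fin d, k ≤ l → lam l ≤ lam k
  hgap : lam ⟨1, by omega⟩ < lam ⟨0, by omega⟩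
  /-- support of the leading eigenvector -/
  J : Finset (Fin d)
  hJ : ∀ i, i ∈ J ↔ u ⟨0, by omega⟩ i ≠ 0
  hslb : 0 < J.card
  hsub : J.card < d
  /-- observation probability -/
  p : ℝ
  hp0 : 0 < p
  hp1 : p ≤ 1
  /-- noise variance -/
  σ2 : ℝ
  hσ2 : 0 ≤ σ2
  /-- a.s. noise bound -/
  B : ℝ
  hB : 0 ≤ B
  /-- Bernoulli sampling indicators -/
  δ : Fin d → Fin d → Ω → ℝ
  /-- noise variables -/
  ε : Fin d → Fin d → Ω → ℝ
  hδsymm : ∀ i j, δ i j = δ j i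
  hεsymm : ∀ i j, ε i j = ε j i
  hδmeas : ∀ i j, Measurable (δ i j)
  hεmeas : ∀ i j, Measurable (ε i j)
  hδ01 : ∀ i j ω, δ i j ω = 0 ∨ δ i j ω = 1
  hδp : ∀ i j, μ {ω | δ i j ω = 1} = ENNReal.ofReal p
  hεmean : ∀ i j, (∫ ω, ε i j ω ∂μ) = 0
  hεvar : ∀ i j, (∫ ω, (ε i j ω) ^ 2 ∂μ) = σ2
  hεbdd : ∀ i j, ∀ᵐ ω ∂μ, |ε i j ω| ≤ B
  /-- all `δ i j` and `ε i j` for `i ≤ j` are mutually independent -/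
  indep : iIndepFun
      (fun q : {q : Fin d × Fin d // q.1 ≤ q.2} ⊕ {q : Fin d × Fin d // q.1 ≤ q.2} =>
        Sum.elim (fun q' => δ q'.1.1 q'.1.2) (fun q' => ε q'.1.1 q'.1.2) q) μ

namespace ObsModel

variable {d : ℕ} {W : Type*} [MeasurableSpace W]

/-- size of the support -/
def s (m : ObsModel d W) : ℕ := m.J.card

/-- the sparse leading eigenvector -/
def u1 (m : ObsModel d W) : Fin d → ℝ := m.u ⟨0, by have := m.hd; omega⟩

/-- largest eigenvalue of `M*` -/
def lam1 (m : ObsModel d W) : ℝ := m.lam ⟨0, by have := m.hd; omega⟩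

/-- the observed random matrix `M` -/
def Mobs (m : ObsModel d W) (ω : W) : Matrix (Fin d) (Fin d) ℝ :=
  fun i j => m.δ i j ω * (m.Mstar i j + m.ε i j ω)

def JJ (m : ObsModel d W) : Matrix m.J m.J ℝ := subm m.Mstar m.J m.J
def JcJ (m : ObsModel d W) : Matrix ↥m.Jᶜ ↥m.J ℝ := subm m.Mstar m.Jᶜ m.J
def JJc (m : ObsModel d W) : Matrix ↥m.J ↥m.Jᶜ ℝ := subm m.Mstar m.J m.Jᶜ
def JcJc (m : ObsModel d W) : Matrix ↥m.Jᶜ ↥m.Jᶜ ℝ := subm m.Mstar m.Jᶜ m.Jᶜ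

/-- spectral gap `λ₁(M*_{J,J}) − λ₂(M*_{J,J})` -/
def gapJJ (m : ObsModel d W) : ℝ := eigvalDesc m.JJ 1 - eigvalDesc m.JJ 2

/-- `min_{i ∈ J} |u₁ᵢ|` -/
def minu (m : ObsModel d W) : ℝ :=
  m.J.inf' (Finset.card_pos.mp m.hslb) (fun i => |m.u1 i|)

def R1 (m : ObsModel d W) : ℝ :=
  max ((1 - m.p) * maxNorm m.JJ + m.B) (m.p * maxNorm m.JJ)
def R2 (m : ObsModel d W) : ℝ :=
  Real.sqrt (m.p * (1 - m.p)) * norm2Inf m.JJ + Real.sqrt (m.p * m.s * m.σ2)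
def R3 (m : ObsModel d W) : ℝ :=
  max ((1 - m.p) * maxNorm m.JcJ + m.B) (m.p * maxNorm m.JcJ)
def R4 (m : ObsModel d W) : ℝ :=
  max (Real.sqrt (m.p * (1 - m.p)) * norm2Inf m.JcJ + Real.sqrt (m.p * ((d : ℝ) - m.s) * m.σ2))
    (Real.sqrt (m.p * (1 - m.p)) * norm2Inf m.JJc + Real.sqrt (m.p * m.s * m.σ2))
def R5 (m : ObsModel d W) : ℝ :=
  max ((1 - m.p) * maxNorm m.JcJc + m.B) (m.p * maxNorm m.JcJc)
def R6 (m : ObsModel d W) : ℝ :=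
  Real.sqrt (m.p * (1 - m.p)) * norm2Inf m.JcJc + Real.sqrt (m.p * ((d : ℝ) - m.s) * m.σ2)

def K1 (m : ObsModel d W) (c : ℝ) : ℝ :=
  (c + 1) * m.R1 * Real.log (2 * (m.s : ℝ))
    + Real.sqrt (2 * (c + 1)) * m.R2 * Real.sqrt (Real.log (2 * (m.s : ℝ)))
def K2 (m : ObsModel d W) (c : ℝ) : ℝ :=
  (c + 1) * m.R3 * Real.log (d : ℝ)
    + Real.sqrt (2 * (c + 1)) * m.R4 * Real.sqrt (Real.log (d : ℝ))
def K3 (m : ObsModel d W) (c : ℝ) : ℝ :=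
  (c + 1) * m.R5 * Real.log (2 * ((d : ℝ) - m.s))
    + Real.sqrt (2 * (c + 1)) * m.R6 * Real.sqrt (Real.log (2 * ((d : ℝ) - m.s)))

/-- the sign vector of `u₁` on `J` -/
def zhat (m : ObsModel d W) : ↥m.J → ℝ := fun i => Real.sign (m.u1 i.1)

/-- coherence parameters -/
def mu0 (m : ObsModel d W) : ℝ := maxNorm m.JJ / m.gapJJ
def mu1 (m : ObsModel d W) : ℝ := maxNorm m.JJ / norm2Inf m.JJ
def mu2 (m : ObsModel d W) : ℝ :=
  min (min (maxNorm m.JcJ / frobNorm m.JcJ)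
      (max (maxNorm m.JcJ / norm2Inf m.JcJ) (maxNorm m.JcJ / norm2Inf m.JcJᵀ)))
    (maxNorm m.JcJ / normInf2 m.JcJᵀ)
def mu3 (m : ObsModel d W) : ℝ :=
  min (maxNorm m.JcJc / specNorm m.JcJc) (maxNorm m.JcJc / norm2Inf m.JcJc)

/-- the event that the SDP has a unique optimal solution whose diagonal support is exactly `J` -/
def ExactRecovery (m : ObsModel d W) (ρ : ℝ) (ω : W) : Prop :=
  ∃ X : Matrix (Fin d) (Fin d) ℝ, IsUniqueSdpOptimal ρ (m.Mobs ω) X ∧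
    ∀ i, X i i ≠ 0 ↔ i ∈ m.J

end ObsModel

end


open MeasureTheory ProbabilityTheory

section auxx
variable {Ω : Type*} [MeasurableSpace Ω] {μ : MeasureTheory.Measure Ω} [IsProbabilityMeasure μ]

lemma integrable_of_bdd' {f : Ω → ℝ} (hm : Measurable f) {C : ℝ}
    (h : ∀ᵐ ω ∂μ, |f ω| ≤ C) : Integrable f μ :=
  Integrable.mono' (integrable_const C) hm.aestronglyMeasurable h

lemma integral_zero_one' {D : Ω → ℝ} (hD : Measurable D)
    (hD01 : ∀ ω, D ω = 0 ∨ D ω = 1) {p : ℝ} (hp : 0 ≤ p)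
    (hDp : μ {ω | D ω = 1} = ENNReal.ofReal p) :
    ∫ ω, D ω ∂μ = p := by
  have hset : MeasurableSet {ω | D ω = 1} := hD (measurableSet_singleton 1)
  have hind : D = Set.indicator {ω | D ω = 1} (fun _ => (1:ℝ)) := by
    funext ω
    rcases hD01 ω with h | h <;> simp [Set.indicator, h]
  rw [hind, integral_indicator hset, setIntegral_const, measureReal_def, hDp, ENNReal.toReal_ofReal hp,
    smul_eq_mul, mul_one]

lemma var_entry' {D E : Ω → ℝ} (hD : Measurable D) (hE : Measurable E)
    (hD01 : ∀ ω, D ω = 0 ∨ D ω = 1) {p σ2 B a : ℝ} (hp : 0 ≤ p)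
    (hDp : μ {ω | D ω = 1} = ENNReal.ofReal p)
    (hEmean : ∫ ω, E ω ∂μ = 0) (hEvar : ∫ ω, (E ω) ^ 2 ∂μ = σ2)
    (hEb : ∀ᵐ ω ∂μ, |E ω| ≤ B)
    (hind : IndepFun D E μ) :
    ∫ ω, (D ω * (a + E ω) - p * a) ^ 2 ∂μ = p * (1 - p) * a ^ 2 + p * σ2 := by
  have hB0 : 0 ≤ B := by
    by_contra hB
    push_neg at hB
    have h0 : ∀ᵐ _ω ∂μ, False := hEb.mono fun ω h => by
      have := abs_nonneg (E ω); linarith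
    exact (IsProbabilityMeasure.ne_zero μ) (by simpa using h0)
  have hDbd : ∀ ω, |D ω| ≤ 1 := fun ω => by rcases hD01 ω with h | h <;> simp [h]
  have intD : Integrable D μ := integrable_of_bdd' hD (Filter.Eventually.of_forall hDbd)
  have intE : Integrable E μ := integrable_of_bdd' hE hEb
  have intE2 : Integrable (fun ω => (E ω) ^ 2) μ := by
    refine integrable_of_bdd' (C := B^2) (hE.pow_const 2) (hEb.mono fun ω h => ?_)
    rw [abs_pow]
    exact pow_le_pow_left₀ (abs_nonneg _) h 2
  have hiD : ∫ ω, D ω ∂μ = p := integral_zero_one' hD hD01 hp hDp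
  have mAE : Measurable fun ω => a + E ω := measurable_const.add hE
  have bAE : ∀ᵐ ω ∂μ, |a + E ω| ≤ |a| + B :=
    hEb.mono fun ω h => (abs_add_le _ _).trans (by linarith)
  have intAE : Integrable (fun ω => a + E ω) μ := integrable_of_bdd' mAE bAE
  have intAE2 : Integrable (fun ω => (a + E ω) ^ 2) μ := by
    refine integrable_of_bdd' (C := (|a|+B)^2) (mAE.pow_const 2) (bAE.mono fun ω h => ?_)
    rw [abs_pow]
    exact pow_le_pow_left₀ (abs_nonneg _) h 2
  have hiAE : ∫ ω, (a + E ω) ∂μ = a := by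
    rw [integral_add (integrable_const a) intE, hEmean, integral_const]
    simp
  have hiAE2 : ∫ ω, (a + E ω) ^ 2 ∂μ = a ^ 2 + σ2 := by
    have h1 : ∀ ω, (a + E ω) ^ 2 = a ^ 2 + (2 * a * E ω + E ω ^ 2) := fun ω => by ring
    have ig : Integrable (fun ω => 2 * a * E ω + E ω ^ 2) μ :=
      (intE.const_mul (2*a)).add intE2
    simp_rw [h1]
    rw [integral_add (integrable_const _) ig,
      integral_add (intE.const_mul (2*a)) intE2, integral_const_mul, hEmean, hEvar,
      integral_const]
    simp
  have hindAE2 : IndepFun D (fun ω => (a + E ω) ^ 2) μ :=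
    hind.comp measurable_id ((measurable_const.add measurable_id).pow_const 2)
  have hindAE : IndepFun D (fun ω => a + E ω) μ :=
    hind.comp measurable_id (measurable_const.add measurable_id)
  have hiDAE2 : ∫ ω, D ω * (a + E ω) ^ 2 ∂μ = p * (a ^ 2 + σ2) := by
    have h := hindAE2.integral_fun_mul_eq_mul_integral intD.aestronglyMeasurable intAE2.aestronglyMeasurable
    rw [hiD, hiAE2] at h
    exact h
  have hiDAE : ∫ ω, D ω * (a + E ω) ∂μ = p * a := by
    have h := hindAE.integral_fun_mul_eq_mul_integral intD.aestronglyMeasurable intAE.aestronglyMeasurable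
    rw [hiD, hiAE] at h
    exact h
  have intDAE2 : Integrable (fun ω => D ω * (a + E ω) ^ 2) μ := by
    refine integrable_of_bdd' (C := (|a|+B)^2) (hD.mul (mAE.pow_const 2)) ?_
    refine bAE.mono fun ω h => ?_
    rw [abs_mul, abs_pow]
    calc |D ω| * |a + E ω| ^ 2 ≤ 1 * (|a| + B) ^ 2 := by
          exact mul_le_mul (hDbd ω) (pow_le_pow_left₀ (abs_nonneg _) h 2)
            (by positivity) zero_le_one
      _ = (|a| + B) ^ 2 := one_mul _
  have intDAE : Integrable (fun ω => D ω * (a + E ω)) μ := by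
    refine integrable_of_bdd' (C := |a|+B) (hD.mul mAE) ?_
    refine bAE.mono fun ω h => ?_
    rw [abs_mul]
    calc |D ω| * |a + E ω| ≤ 1 * (|a| + B) :=
          mul_le_mul (hDbd ω) h (abs_nonneg _) zero_le_one
      _ = |a| + B := one_mul _
  have hpt : ∀ ω, (D ω * (a + E ω) - p * a) ^ 2
      = D ω * (a + E ω) ^ 2 - 2 * p * a * (D ω * (a + E ω)) + p ^ 2 * a ^ 2 := by
    intro ω
    rcases hD01 ω with h | h <;> (rw [h]; ring)
  have isub : Integrable (fun ω => D ω * (a + E ω) ^ 2 - 2 * p * a * (D ω * (a + E ω))) μ :=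
    intDAE2.sub (intDAE.const_mul (2*p*a))
  simp_rw [hpt]
  rw [integral_add isub (integrable_const _),
    integral_sub intDAE2 (intDAE.const_mul (2*p*a)), integral_const_mul, hiDAE2, hiDAE,
    integral_const]
  simp only [probReal_univ, measure_univ, ENNReal.toReal_one, smul_eq_mul, one_mul]
  ring

end auxx


section mainaux
open MeasureTheory ProbabilityTheory
variable {d : ℕ} {W : Type*} [MeasurableSpace W]

lemma ObsModel.indep_pair (m : ObsModel d W) (i j : Fin d) :
    IndepFun (m.δ i j) (m.ε i j) m.μ := by
  rcases le_total i j with h | h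
  · exact m.indep.indepFun (i := Sum.inl ⟨(i,j),h⟩) (j := Sum.inr ⟨(i,j),h⟩) (by simp)
  · rw [m.hδsymm, m.hεsymm]
    exact m.indep.indepFun (i := Sum.inl ⟨(j,i),h⟩) (j := Sum.inr ⟨(j,i),h⟩) (by simp)

end mainaux

set_option maxHeartbeats 2000000 in
/-- Lemma 9: high-probability ℓ₂ bound on `ŵ`. -/
theorem w_l2_bound {d : ℕ} {W : Type*} [MeasurableSpace W]
    (m : ObsModel d W) (ρ c : ℝ) (hρ : 0 < ρ) (hc : 0 < c) :
    ENNReal.ofReal (1 - (m.s : ℝ) ^ (-c))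
      ≤ m.μ {ω | ∀ xh : ↥m.J → ℝ, (∑ i, (xh i) ^ 2 = 1) →
          (subm (m.Mobs ω) m.J m.J - ρ • Matrix.vecMulVec m.zhat m.zhat).mulVec xh
            = eigvalDesc (subm (m.Mobs ω) m.J m.J
                - ρ • Matrix.vecMulVec m.zhat m.zhat) 1 • xh →
          Real.sqrt (∑ i : ↥m.Jᶜ,
              (((ρ * ∑ k, |xh k|)⁻¹ • (subm (m.Mobs ω) m.Jᶜ m.J).mulVec xh) i) ^ 2)
            ≤ m.p / ρ * Real.sqrt (∑ i : ↥m.Jᶜ, (⨆ j : ↥m.J, |m.Mstar i.1 j.1|) ^ 2)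
              + Real.sqrt ((m.s : ℝ) ^ c *
                  (m.p * (1 - m.p) * frobNorm m.JcJ ^ 2
                    + m.p * m.s * ((d : ℝ) - m.s) * m.σ2))
                * Real.sqrt ((d : ℝ) - m.s) / ρ} :=  by
  classical
  haveI := m.probμ
  have hp0 := m.hp0
  have hp1 := m.hp1
  have hcard : m.J.card ≤ d := by
    have := m.hsub
    omega
  have hspos : (0:ℝ) < (m.s : ℝ) := by exact_mod_cast m.hslb
  have hds1 : (1:ℝ) ≤ (d:ℝ) - (m.s : ℝ) := by
    have h1 : (m.s : ℝ) + 1 ≤ (d : ℝ) := by exact_mod_cast m.hsub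
    linarith
  set V : ℝ := m.p * (1 - m.p) * frobNorm m.JcJ ^ 2
      + m.p * m.s * ((d : ℝ) - m.s) * m.σ2 with hVdef
  have hfrobnn : (0:ℝ) ≤ frobNorm m.JcJ ^ 2 := sq_nonneg _
  have hVnn : 0 ≤ V := by
    have := m.hσ2
    have h1 : (0:ℝ) ≤ 1 - m.p := by linarith
    have h2 : (0:ℝ) ≤ (d:ℝ) - m.s := by linarith
    rw [hVdef]
    positivity
  set T : ℝ := (m.s : ℝ) ^ c * V with hTdef
  have hscpos : (0:ℝ) < (m.s : ℝ) ^ c := Real.rpow_pos_of_pos hspos c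
  have hTnn : 0 ≤ T := mul_nonneg hscpos.le hVnn
  set f : W → ℝ := fun ω => ∑ i : ↥m.Jᶜ, ∑ k : ↥m.J,
      (m.Mobs ω i.1 k.1 - m.p * m.Mstar i.1 k.1) ^ 2 with hfdef
  have hfnn : ∀ ω, 0 ≤ f ω := fun ω =>
    Finset.sum_nonneg fun i _ => Finset.sum_nonneg fun k _ => sq_nonneg _
  have hmeas_each : ∀ i k : Fin d,
      Measurable (fun ω => (m.Mobs ω i k - m.p * m.Mstar i k) ^ 2) := by
    intro i k
    exact (((m.hδmeas i k).mul (measurable_const.add (m.hεmeas i k))).sub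
      measurable_const).pow_const 2
  have hmeasf : Measurable f := by
    refine Finset.measurable_sum _ fun i _ => ?_
    exact Finset.measurable_sum _ fun k _ => hmeas_each i.1 k.1
  have hint_each : ∀ i k : Fin d,
      Integrable (fun ω => (m.Mobs ω i k - m.p * m.Mstar i k) ^ 2) m.μ := by
    intro i k
    refine integrable_of_bdd' (C := (|m.Mstar i k| + m.B + m.p * |m.Mstar i k|) ^ 2)
      (hmeas_each i k) ?_
    filter_upwards [m.hεbdd i k] with ω hε
    have hδb : |m.δ i k ω| ≤ 1 := by rcases m.hδ01 i k ω with h | h <;> simp [h]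
    have h2 : |m.δ i k ω * (m.Mstar i k + m.ε i k ω)| ≤ |m.Mstar i k| + m.B := by
      rw [abs_mul]
      calc |m.δ i k ω| * |m.Mstar i k + m.ε i k ω| ≤ 1 * |m.Mstar i k + m.ε i k ω| :=
            mul_le_mul_of_nonneg_right hδb (abs_nonneg _)
        _ = |m.Mstar i k + m.ε i k ω| := one_mul _
        _ ≤ |m.Mstar i k| + |m.ε i k ω| := abs_add_le _ _
        _ ≤ |m.Mstar i k| + m.B := by linarith
    have h3 : |m.p * m.Mstar i k| = m.p * |m.Mstar i k| := by
      rw [abs_mul, abs_of_nonneg hp0.le]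
    have h1 : |m.Mobs ω i k - m.p * m.Mstar i k|
        ≤ |m.Mstar i k| + m.B + m.p * |m.Mstar i k| := by
      have hobs : m.Mobs ω i k = m.δ i k ω * (m.Mstar i k + m.ε i k ω) := rfl
      calc |m.Mobs ω i k - m.p * m.Mstar i k|
          ≤ |m.Mobs ω i k| + |m.p * m.Mstar i k| := abs_sub _ _
        _ ≤ |m.Mstar i k| + m.B + m.p * |m.Mstar i k| := by
            rw [hobs, h3]
            linarith
    rw [abs_pow]
    exact pow_le_pow_left₀ (abs_nonneg _) h1 2
  have hivar : ∀ i k : Fin d,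
      ∫ ω, (m.Mobs ω i k - m.p * m.Mstar i k) ^ 2 ∂m.μ
        = m.p * (1 - m.p) * (m.Mstar i k) ^ 2 + m.p * m.σ2 := by
    intro i k
    exact var_entry' (m.hδmeas i k) (m.hεmeas i k) (m.hδ01 i k) hp0.le (m.hδp i k)
      (m.hεmean i k) (m.hεvar i k) (m.hεbdd i k) (m.indep_pair i k)
  have hfint_inner : ∀ i : ↥m.Jᶜ,
      Integrable (fun ω => ∑ k : ↥m.J,
        (m.Mobs ω i.1 k.1 - m.p * m.Mstar i.1 k.1) ^ 2) m.μ :=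
    fun i => integrable_finset_sum _ fun k _ => hint_each i.1 k.1
  have hfint : Integrable f m.μ :=
    integrable_finset_sum _ fun i _ => hfint_inner i
  have hcardc : ((Fintype.card ↥(m.Jᶜ) : ℕ) : ℝ) = (d:ℝ) - (m.s : ℝ) := by
    rw [Fintype.card_coe, Finset.card_compl, Fintype.card_fin, Nat.cast_sub hcard]
    rfl
  have hfrob_sq : frobNorm m.JcJ ^ 2
      = ∑ i : ↥m.Jᶜ, ∑ k : ↥m.J, (m.Mstar i.1 k.1) ^ 2 := by
    have h0 : (0:ℝ) ≤ ∑ i : ↥m.Jᶜ, ∑ k : ↥m.J, (m.JcJ i k) ^ 2 :=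
      Finset.sum_nonneg fun i _ => Finset.sum_nonneg fun k _ => sq_nonneg _
    rw [frobNorm, Real.sq_sqrt h0]
    rfl
  have hfi : ∫ ω, f ω ∂m.μ = V := by
    have hstep1 : ∫ ω, f ω ∂m.μ = ∑ i : ↥m.Jᶜ, ∑ k : ↥m.J,
        (m.p * (1 - m.p) * (m.Mstar i.1 k.1) ^ 2 + m.p * m.σ2) := by
      rw [hfdef]
      rw [integral_finset_sum _ fun i _ => hfint_inner i]
      refine Finset.sum_congr rfl fun i _ => ?_
      rw [integral_finset_sum _ fun k _ => hint_each i.1 k.1]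
      exact Finset.sum_congr rfl fun k _ => hivar i.1 k.1
    rw [hstep1]
    have hinner : ∀ i : ↥m.Jᶜ, ∑ k : ↥m.J,
        (m.p * (1 - m.p) * (m.Mstar i.1 k.1) ^ 2 + m.p * m.σ2)
          = m.p * (1 - m.p) * (∑ k : ↥m.J, (m.Mstar i.1 k.1) ^ 2)
            + (m.s : ℝ) * (m.p * m.σ2) := by
      intro i
      rw [Finset.sum_add_distrib, ← Finset.mul_sum, Finset.sum_const, Finset.card_univ,
        Fintype.card_coe, nsmul_eq_mul]
      rfl
    simp_rw [hinner]
    rw [Finset.sum_add_distrib, ← Finset.mul_sum, Finset.sum_const, Finset.card_univ,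
      nsmul_eq_mul, hcardc, hVdef, hfrob_sq]
    ring
  have hEvent : MeasurableSet {ω | f ω ≤ T} := measurableSet_le hmeasf measurable_const
  have hcompl : m.μ {ω | f ω ≤ T}ᶜ ≤ ENNReal.ofReal ((m.s : ℝ) ^ (-c)) := by
    rcases eq_or_lt_of_le hVnn with hV0 | hVpos
    · have hf0 : f =ᵐ[m.μ] 0 :=
        (integral_eq_zero_iff_of_nonneg hfnn hfint).1 (by rw [hfi, ← hV0])
      have hae : ∀ᵐ ω ∂m.μ, f ω ≤ T := by
        filter_upwards [hf0] with ω h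
        calc f ω = 0 := h
          _ ≤ T := hTnn
      have h0 : m.μ {ω | f ω ≤ T}ᶜ = 0 := by
        rw [Set.compl_setOf]
        exact hae
      rw [h0]
      exact bot_le
    · have hTpos : 0 < T := mul_pos hscpos hVpos
      have hm := mul_meas_ge_le_integral_of_nonneg (μ := m.μ)
        (Filter.Eventually.of_forall hfnn) hfint T
      rw [hfi] at hm
      have hVT : V / T = (m.s : ℝ) ^ (-c) := by
        rw [hTdef, Real.rpow_neg hspos.le, mul_comm, ← div_div, div_self hVpos.ne',
          one_div]
      have htoReal : (m.μ {x | T ≤ f x}).toReal ≤ (m.s : ℝ) ^ (-c) := by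
        rw [← hVT]
        exact (le_div_iff₀ hTpos).2 (by rw [measureReal_def] at hm; linarith)
      calc m.μ {ω | f ω ≤ T}ᶜ ≤ m.μ {x | T ≤ f x} := by
            refine measure_mono fun x hx => ?_
            simp only [Set.mem_compl_iff, Set.mem_setOf_eq] at hx ⊢
            exact (not_le.mp hx).le
        _ = ENNReal.ofReal ((m.μ {x | T ≤ f x}).toReal) :=
            (ENNReal.ofReal_toReal (measure_ne_top _ _)).symm
        _ ≤ ENNReal.ofReal ((m.s : ℝ) ^ (-c)) := ENNReal.ofReal_le_ofReal htoReal
  have hE0 : ENNReal.ofReal (1 - (m.s : ℝ) ^ (-c)) ≤ m.μ {ω | f ω ≤ T} := by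
    have hadd : m.μ {ω | f ω ≤ T} + m.μ {ω | f ω ≤ T}ᶜ = 1 :=
      prob_add_prob_compl hEvent
    have hnc : (0:ℝ) ≤ (m.s : ℝ) ^ (-c) := (Real.rpow_pos_of_pos hspos _).le
    calc ENNReal.ofReal (1 - (m.s : ℝ) ^ (-c))
        = 1 - ENNReal.ofReal ((m.s : ℝ) ^ (-c)) := by
          rw [ENNReal.ofReal_sub _ hnc, ENNReal.ofReal_one]
      _ ≤ 1 - m.μ {ω | f ω ≤ T}ᶜ := tsub_le_tsub_left hcompl 1
      _ ≤ m.μ {ω | f ω ≤ T} := tsub_le_iff_right.2 hadd.ge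
  clear_value V T
  refine le_trans hE0 (measure_mono ?_)
  intro ω hω
  simp only [Set.mem_setOf_eq] at hω ⊢
  intro xh hx2 _heig
  set L : ℝ := ∑ k : ↥m.J, |xh k| with hLdef
  have hLnn : 0 ≤ L := Finset.sum_nonneg fun i _ => abs_nonneg _
  have hL1 : 1 ≤ L := by
    have h1 : ∑ k : ↥m.J, (xh k) ^ 2 ≤ L ^ 2 := by
      calc ∑ k : ↥m.J, (xh k) ^ 2 = ∑ k : ↥m.J, |xh k| ^ 2 := by simp [sq_abs]
        _ ≤ L ^ 2 := Finset.sum_sq_le_sq_sum_of_nonneg fun i _ => abs_nonneg _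
    nlinarith [hx2]
  have hLpos : 0 < L := lt_of_lt_of_le one_pos hL1
  have hρL : 0 < ρ * L := mul_pos hρ hLpos
  haveI hJne : Nonempty ↥m.J := by
    obtain ⟨j, hj⟩ := Finset.card_pos.mp m.hslb
    exact ⟨⟨j, hj⟩⟩
  set S : ℝ := Real.sqrt (∑ i : ↥m.Jᶜ, (⨆ j : ↥m.J, |m.Mstar i.1 j.1|) ^ 2) with hSdef
  have hSnn : 0 ≤ S := Real.sqrt_nonneg _
  have hsup_bdd : ∀ (i : ↥m.Jᶜ) (k : ↥m.J),
      |m.Mstar i.1 k.1| ≤ ⨆ j : ↥m.J, |m.Mstar i.1 j.1| := fun i k =>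
    le_ciSup (f := fun j : ↥m.J => |m.Mstar i.1 j.1|)
      (Set.Finite.bddAbove (Set.finite_range _)) k
  clear_value L S
  set uu : EuclideanSpace ℝ ↥m.Jᶜ :=
    WithLp.toLp 2 (fun i => ∑ k : ↥m.J, m.Mstar i.1 k.1 * xh k) with huudef
  set nn : EuclideanSpace ℝ ↥m.Jᶜ :=
    WithLp.toLp 2 (fun i => ∑ k : ↥m.J, (m.Mobs ω i.1 k.1 - m.p * m.Mstar i.1 k.1) * xh k) with hnndef
  have hui : ∀ i : ↥m.Jᶜ, |uu i| ≤ (⨆ j : ↥m.J, |m.Mstar i.1 j.1|) * L := by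
    intro i
    rw [hLdef]
    calc |uu i| ≤ ∑ k : ↥m.J, |m.Mstar i.1 k.1 * xh k| := by
          rw [huudef]
          exact Finset.abs_sum_le_sum_abs _ _
      _ = ∑ k : ↥m.J, |m.Mstar i.1 k.1| * |xh k| := by simp [abs_mul]
      _ ≤ ∑ k : ↥m.J, (⨆ j : ↥m.J, |m.Mstar i.1 j.1|) * |xh k| :=
          Finset.sum_le_sum fun k _ =>
            mul_le_mul_of_nonneg_right (hsup_bdd i k) (abs_nonneg _)
      _ = (⨆ j : ↥m.J, |m.Mstar i.1 j.1|) * ∑ k : ↥m.J, |xh k| := by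
          rw [← Finset.mul_sum]
  have hrow : ∀ i : ↥m.Jᶜ, (nn i) ^ 2
      ≤ ∑ k : ↥m.J, (m.Mobs ω i.1 k.1 - m.p * m.Mstar i.1 k.1) ^ 2 := by
    intro i
    have hcs := Finset.sum_mul_sq_le_sq_mul_sq Finset.univ
      (fun k : ↥m.J => m.Mobs ω i.1 k.1 - m.p * m.Mstar i.1 k.1) xh
    calc (nn i) ^ 2
        ≤ (∑ k : ↥m.J, (m.Mobs ω i.1 k.1 - m.p * m.Mstar i.1 k.1) ^ 2)
          * ∑ k : ↥m.J, (xh k) ^ 2 := by rw [hnndef]; exact hcs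
      _ = ∑ k : ↥m.J, (m.Mobs ω i.1 k.1 - m.p * m.Mstar i.1 k.1) ^ 2 := by
          rw [hx2, mul_one]
  have hdecomp : ∀ i : ↥m.Jᶜ,
      (subm (m.Mobs ω) m.Jᶜ m.J).mulVec xh i = m.p * uu i + nn i := by
    intro i
    have h1 : (subm (m.Mobs ω) m.Jᶜ m.J).mulVec xh i
        = ∑ k : ↥m.J, m.Mobs ω i.1 k.1 * xh k := by
      simp [Matrix.mulVec, dotProduct, subm]
    rw [h1, huudef, hnndef]
    simp only
    rw [Finset.mul_sum, ← Finset.sum_add_distrib]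
    refine Finset.sum_congr rfl fun k _ => ?_
    ring
  clear_value uu nn
  have hnormU : ‖uu‖ ≤ L * S := by
    rw [EuclideanSpace.norm_eq]
    simp only [Real.norm_eq_abs, sq_abs]
    have hsum : ∑ i : ↥m.Jᶜ, (uu i) ^ 2
        ≤ ∑ i : ↥m.Jᶜ, ((⨆ j : ↥m.J, |m.Mstar i.1 j.1|) * L) ^ 2 := by
      refine Finset.sum_le_sum fun i _ => ?_
      rw [← sq_abs (uu i)]
      exact pow_le_pow_left₀ (abs_nonneg _) (hui i) 2
    have heq : ∑ i : ↥m.Jᶜ, ((⨆ j : ↥m.J, |m.Mstar i.1 j.1|) * L) ^ 2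
        = L ^ 2 * ∑ i : ↥m.Jᶜ, (⨆ j : ↥m.J, |m.Mstar i.1 j.1|) ^ 2 := by
      rw [Finset.mul_sum]
      exact Finset.sum_congr rfl fun i _ => by ring
    calc Real.sqrt (∑ i : ↥m.Jᶜ, (uu i) ^ 2)
        ≤ Real.sqrt (L ^ 2 * ∑ i : ↥m.Jᶜ, (⨆ j : ↥m.J, |m.Mstar i.1 j.1|) ^ 2) := by
          rw [← heq]; exact Real.sqrt_le_sqrt hsum
      _ = L * S := by
          rw [Real.sqrt_mul (sq_nonneg L), Real.sqrt_sq hLnn, hSdef]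
  have hnormN : ‖nn‖ ≤ Real.sqrt T := by
    rw [EuclideanSpace.norm_eq]
    simp only [Real.norm_eq_abs, sq_abs]
    refine Real.sqrt_le_sqrt ?_
    calc ∑ i : ↥m.Jᶜ, (nn i) ^ 2
        ≤ ∑ i : ↥m.Jᶜ, ∑ k : ↥m.J, (m.Mobs ω i.1 k.1 - m.p * m.Mstar i.1 k.1) ^ 2 :=
          Finset.sum_le_sum fun i _ => hrow i
      _ ≤ T := hω
  have happ : ∀ i : ↥m.Jᶜ,
      ((ρ * L)⁻¹ • (subm (m.Mobs ω) m.Jᶜ m.J).mulVec xh) i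
        = (ρ * L)⁻¹ * ((m.p • uu + nn : EuclideanSpace ℝ ↥m.Jᶜ) i) := by
    intro i
    simp only [Pi.smul_apply, smul_eq_mul, PiLp.add_apply, PiLp.smul_apply]
    rw [hdecomp i]
  have hLHS : Real.sqrt (∑ i : ↥m.Jᶜ,
      (((ρ * L)⁻¹ • (subm (m.Mobs ω) m.Jᶜ m.J).mulVec xh) i) ^ 2)
        = (ρ * L)⁻¹ * ‖(m.p • uu + nn : EuclideanSpace ℝ ↥m.Jᶜ)‖ := by
    have h1 : ∀ i : ↥m.Jᶜ,
        (((ρ * L)⁻¹ • (subm (m.Mobs ω) m.Jᶜ m.J).mulVec xh) i) ^ 2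
          = ((ρ * L)⁻¹) ^ 2 * ((m.p • uu + nn : EuclideanSpace ℝ ↥m.Jᶜ) i) ^ 2 := by
      intro i
      rw [happ i]
      ring
    have h2 : ∑ i : ↥m.Jᶜ,
        (((ρ * L)⁻¹ • (subm (m.Mobs ω) m.Jᶜ m.J).mulVec xh) i) ^ 2
          = ((ρ * L)⁻¹) ^ 2 * ∑ i : ↥m.Jᶜ,
            ((m.p • uu + nn : EuclideanSpace ℝ ↥m.Jᶜ) i) ^ 2 := by
      rw [Finset.mul_sum]
      exact Finset.sum_congr rfl fun i _ => h1 i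
    rw [h2, Real.sqrt_mul (sq_nonneg _), Real.sqrt_sq (inv_nonneg.mpr hρL.le)]
    congr 1
    rw [EuclideanSpace.norm_eq]
    congr 1
    exact Finset.sum_congr rfl fun i _ => by rw [Real.norm_eq_abs, sq_abs]
  have hnorm_add : ‖(m.p • uu + nn : EuclideanSpace ℝ ↥m.Jᶜ)‖
      ≤ m.p * (L * S) + Real.sqrt T := by
    calc ‖(m.p • uu + nn : EuclideanSpace ℝ ↥m.Jᶜ)‖ ≤ ‖m.p • uu‖ + ‖nn‖ := norm_add_le _ _
      _ = m.p * ‖uu‖ + ‖nn‖ := by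
          rw [norm_smul, Real.norm_eq_abs, abs_of_nonneg hp0.le]
      _ ≤ m.p * (L * S) + Real.sqrt T :=
          add_le_add (mul_le_mul_of_nonneg_left hnormU hp0.le) hnormN
  have hfinal : (ρ * L)⁻¹ * (m.p * (L * S) + Real.sqrt T)
      ≤ m.p / ρ * S + Real.sqrt T * Real.sqrt ((d:ℝ) - m.s) / ρ := by
    have hd1 : 1 ≤ Real.sqrt ((d:ℝ) - m.s) := by
      rw [show (1:ℝ) = Real.sqrt 1 from Real.sqrt_one.symm]
      exact Real.sqrt_le_sqrt hds1
    have hA : (ρ * L)⁻¹ * (m.p * (L * S)) = m.p / ρ * S := by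
      calc (ρ * L)⁻¹ * (m.p * (L * S)) = m.p * S * (L * L⁻¹) * ρ⁻¹ := by
            rw [mul_inv]; ring
        _ = m.p / ρ * S := by
            rw [mul_inv_cancel₀ hLpos.ne', div_eq_mul_inv]; ring
    have hsqTnn : 0 ≤ Real.sqrt T := Real.sqrt_nonneg _
    have hB : (ρ * L)⁻¹ * Real.sqrt T ≤ Real.sqrt T * Real.sqrt ((d:ℝ) - m.s) / ρ := by
      rw [mul_inv, div_eq_mul_inv]
      have hLinv : L⁻¹ ≤ 1 := by
        rw [inv_le_one_iff₀]
        right; exact hL1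
      have hρinv : (0:ℝ) ≤ ρ⁻¹ := inv_nonneg.mpr hρ.le
      have hLinvnn : (0:ℝ) ≤ L⁻¹ := inv_nonneg.mpr hLpos.le
      calc ρ⁻¹ * L⁻¹ * Real.sqrt T ≤ ρ⁻¹ * 1 * Real.sqrt T := by
            refine mul_le_mul_of_nonneg_right ?_ hsqTnn
            exact mul_le_mul_of_nonneg_left hLinv hρinv
        _ = Real.sqrt T * ρ⁻¹ := by ring
        _ ≤ Real.sqrt T * Real.sqrt ((d:ℝ) - m.s) * ρ⁻¹ := by
            refine mul_le_mul_of_nonneg_right ?_ hρinv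
            nlinarith
    calc (ρ * L)⁻¹ * (m.p * (L * S) + Real.sqrt T)
        = (ρ * L)⁻¹ * (m.p * (L * S)) + (ρ * L)⁻¹ * Real.sqrt T := by ring
      _ ≤ m.p / ρ * S + Real.sqrt T * Real.sqrt ((d:ℝ) - m.s) / ρ := by
          rw [hA]
          exact add_le_add_right hB _
  calc Real.sqrt (∑ i : ↥m.Jᶜ,
      (((ρ * L)⁻¹ • (subm (m.Mobs ω) m.Jᶜ m.J).mulVec xh) i) ^ 2)
      = (ρ * L)⁻¹ * ‖(m.p • uu + nn : EuclideanSpace ℝ ↥m.Jᶜ)‖ := hLHS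
    _ ≤ (ρ * L)⁻¹ * (m.p * (L * S) + Real.sqrt T) :=
        mul_le_mul_of_nonneg_left hnorm_add (inv_nonneg.mpr hρL.le)
    _ ≤ m.p / ρ * S + Real.sqrt T * Real.sqrt ((d:ℝ) - m.s) / ρ := hfinal
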